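/- Let T be a finite tree with a leaf v, and let T' be the tree obtained from T by adding a new path a-b on two vertices together with the edge joining a to v, and also adding a new vertex w joined by an edge to v. Then T' is eternal distance-2 domination critical if and only if T is eternal distance-2 domination critical. -/

import Mathlib

/-!
Up to isomorphism `T'` is `T` with a pendant leaf `w` and a pendant path `a - b` attached at `v`,
and each vertex deletion of `T'` that keeps it connected is a deletion from `T` with a small
gadget attached: deleting `t ≠ v` keeps the gadget at `v`; deleting `w` (resp. `b`) leaves a
pendant path on three vertices (resp. a pendant cherry) at the neighbour `u` of `v` in `T - v`;
deleting `v` or `a` disconnects `T'`.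

Each gadget costs exactly one more guard. One extra guard suffices: it waits at a hub of the
gadget and, when it has to leave, swaps through the attachment vertex with a guard of the
smaller graph. Conversely, every configuration of the larger graph has a guard covering the far
end `b` of the gadget. Drop such a guard and collapse the gadget onto its attachment vertex: an
attack on the smaller graph is answered as an attack on a preimage out of reach of `b`, after
which a guard covering `b` is dropped again, and the guard that moves onto the newly dropped one
takes over the move of the previously dropped one. Hence `γ^∞_{all,2}` of every relevant
deletion of `T'` is one more than that of the matching deletion of `T` (for `b` only the upper
bound is needed), and criticality transfers in both directions.
-/

open SimpleGraph

universe u v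

namespace EternalDom

variable {V : Type u} {W : Type v}

/-- `x` is within distance `k` of `y` in `G` (in particular, a path between them exists). -/
def WithinDist (G : SimpleGraph V) (k : ℕ) (x y : V) : Prop :=
  G.Reachable x y ∧ G.dist x y ≤ k

/-- A multiset of guards is distance-`k` dominating: every vertex is within
distance `k` of some guard. -/
def IsDistKDomMultiset (G : SimpleGraph V) (k : ℕ) (D : Multiset V) : Prop :=
  ∀ w : V, ∃ x ∈ D, WithinDist G k x w

/-- `F` is an eternal distance-`k` defence family of guard configurations of size `m`:
a nonempty family of distance-`k` dominating multisets, all of cardinality `m`, such that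
for every configuration `D ∈ F` and every attacked vertex `w` there is a configuration
`D' ∈ F` containing `w` that is obtained from `D` by a matching (bijection) moving each
guard a distance of at most `k`. -/
def IsEternalFamily (G : SimpleGraph V) (k m : ℕ) (F : Set (Multiset V)) : Prop :=
  F.Nonempty ∧
    (∀ D ∈ F, Multiset.card D = m ∧ IsDistKDomMultiset G k D) ∧
    (∀ D ∈ F, ∀ w : V, ∃ D' ∈ F, w ∈ D' ∧ Multiset.Rel (WithinDist G k) D D')

/-- The eternal distance-`k` domination number `γ^∞_{all,k}(G)`. -/
noncomputable def eternalNum (G : SimpleGraph V) (k : ℕ) : ℕ :=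
  sInf {m | ∃ F : Set (Multiset V), IsEternalFamily G k m F}

/-- `x` dominates `w`: they are equal or adjacent. -/
def Dominates (G : SimpleGraph V) (x w : V) : Prop := w = x ∨ G.Adj x w

/-- A dominating set of vertices. -/
def IsDomSet (G : SimpleGraph V) (D : Set V) : Prop := ∀ w : V, ∃ x ∈ D, Dominates G x w

/-- The domination number `γ(G)`. -/
noncomputable def domNum (G : SimpleGraph V) : ℕ :=
  sInf {n | ∃ D : Set V, IsDomSet G D ∧ D.ncard = n}

/-- A distance-`k` dominating set of vertices. -/
def IsDistKDomSet (G : SimpleGraph V) (k : ℕ) (D : Set V) : Prop :=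
  ∀ w : V, ∃ x ∈ D, WithinDist G k x w

/-- The distance-`k` domination number `γ_k(G)`. -/
noncomputable def distDomNum (G : SimpleGraph V) (k : ℕ) : ℕ :=
  sInf {n | ∃ D : Set V, IsDistKDomSet G k D ∧ D.ncard = n}

/-- A leaf: a vertex of degree 1, i.e. with a unique neighbour. -/
def IsLeafV (G : SimpleGraph V) (x : V) : Prop := ∃! y, G.Adj x y

/-- A stem: a vertex adjacent to at least one leaf. -/
def IsStem (G : SimpleGraph V) (x : V) : Prop := ∃ y, G.Adj x y ∧ IsLeafV G y

/-- `k`-leaves: a `0`-leaf is a leaf; for `k > 0`, `v` is a `k`-leaf iff `v` is adjacent to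
some `(k-1)`-leaf and all but at most one of the neighbours of `v` are `t`-leaves for some
`t < k`. -/
def IsKLeaf (G : SimpleGraph V) : ℕ → V → Prop
  | 0, v => IsLeafV G v
  | (k + 1), v =>
      (∃ u, G.Adj v u ∧ IsKLeaf G k u) ∧
        ∃ w : V, ∀ x : V, G.Adj v x → x ≠ w → ∃ t, ∃ _ : t ≤ k, IsKLeaf G t x
  termination_by k _ => k
  decreasing_by all_goals omega

/-- For a 2-leaf `v`, the set `L(v)`: the union of `L[u]` over all neighbours `u` of `v`
which are 0-leaves or 1-leaves, where for a 1-leaf `u`, `L[u]` consists of `u` and the leaves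
adjacent to `u`. -/
def Lopen (G : SimpleGraph V) (v : V) : Set V :=
  {x | ∃ u, G.Adj v u ∧
    ((IsKLeaf G 0 u ∧ x = u) ∨
      (IsKLeaf G 1 u ∧ (x = u ∨ (G.Adj u x ∧ IsKLeaf G 0 x))))}

/-- For a 2-leaf `v`, the set `L[v] = L(v) ∪ {v}`. -/
def Lclosed (G : SimpleGraph V) (v : V) : Set V := insert v (Lopen G v)

/-- A graph is eternal distance-2 domination critical if deleting any non-cut vertex
(one whose removal leaves the graph connected) strictly decreases the eternal
distance-2 domination number. -/
def EternalCritical (G : SimpleGraph V) : Prop :=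
  ∀ x : V, (G.induce {y | y ≠ x}).Connected →
    eternalNum (G.induce {y | y ≠ x}) 2 < eternalNum G 2

/-- Attach a pendant path `x₁ x₂ … xₙ` on `n` new vertices to the vertex `y`,
via the edge `y x₁`. -/
def attachPath (G : SimpleGraph V) (y : V) (n : ℕ) : SimpleGraph (V ⊕ Fin n) :=
  G.map Sum.inl ⊔ (pathGraph n).map Sum.inr ⊔
    fromEdgeSet {e | ∃ h : 0 < n, e = s(Sum.inl y, Sum.inr ⟨0, h⟩)}

/-- The star `K_{1,m}`: centre `0`, leaves the `m` nonzero elements of `Fin (m+1)`. -/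
def starGraph (m : ℕ) : SimpleGraph (Fin (m + 1)) where
  Adj x y := (x = 0 ∧ y ≠ 0) ∨ (y = 0 ∧ x ≠ 0)
  symm := ⟨by tauto⟩
  loopless := ⟨by rintro x (⟨h1, h2⟩ | ⟨h1, h2⟩) <;> exact h2 h1⟩

/-- Disjoint union of `G` and the star `K_{1,m}` together with one edge joining the
vertex `a` of the star to the vertex `y` of `G`. -/
def attachStar (G : SimpleGraph V) (y : V) (m : ℕ) (a : Fin (m + 1)) :
    SimpleGraph (V ⊕ Fin (m + 1)) :=
  G.map Sum.inl ⊔ (starGraph m).map Sum.inr ⊔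
    fromEdgeSet {s(Sum.inl y, Sum.inr a)}

/-- From `G` and a vertex `v`: add a new star `K_{1,m}` joined by an edge from its centre
to `v`, together with `t` new leaves adjacent to `v`. -/
def addStarAndLeaves (G : SimpleGraph V) (v : V) (m t : ℕ) :
    SimpleGraph (V ⊕ (Fin (m + 1) ⊕ Fin t)) :=
  G.map Sum.inl ⊔
    (starGraph m).map (Sum.inr ∘ Sum.inl) ⊔
    fromEdgeSet ({s(Sum.inl v, Sum.inr (Sum.inl 0))} ∪
      {e | ∃ i : Fin t, e = s(Sum.inl v, Sum.inr (Sum.inr i))})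

/-- From `G` and a vertex `v`: add two new stars `K_{1,m}` and `K_{1,M}`, joining the
centre of each new star to `v` by an edge. -/
def addTwoStars (G : SimpleGraph V) (v : V) (m M : ℕ) :
    SimpleGraph (V ⊕ (Fin (m + 1) ⊕ Fin (M + 1))) :=
  G.map Sum.inl ⊔
    (starGraph m).map (Sum.inr ∘ Sum.inl) ⊔
    (starGraph M).map (Sum.inr ∘ Sum.inr) ⊔
    fromEdgeSet {s(Sum.inl v, Sum.inr (Sum.inl 0)), s(Sum.inl v, Sum.inr (Sum.inr 0))}

/-- The 1-sum of `G` and `H` at the vertex `u` of `G` and the vertex `w` of `H`: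
the disjoint union of `G` and `H` with `u` and `w` identified. -/
def oneSum (G : SimpleGraph V) (H : SimpleGraph W) (u : V) (w : W) :
    SimpleGraph (V ⊕ {x : W // x ≠ w}) where
  Adj x y :=
    match x, y with
    | Sum.inl a, Sum.inl b => G.Adj a b
    | Sum.inr a, Sum.inr b => H.Adj a.1 b.1
    | Sum.inl a, Sum.inr b => a = u ∧ H.Adj w b.1
    | Sum.inr a, Sum.inl b => b = u ∧ H.Adj w a.1
  symm := ⟨by
    rintro (a | a) (b | b) h
    · exact h.symm
    · exact h
    · exact h
    · exact h.symm⟩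
  loopless := ⟨by
    rintro (a | a) h
    · exact G.loopless.irrefl a h
    · exact H.loopless.irrefl a.1 h⟩


section

variable {α β : Type*} {G : SimpleGraph α} {j k : ℕ} {x y z : α}

namespace WithinDist

theorem of_walk (p : G.Walk x y) (hp : p.length ≤ k) : WithinDist G k x y :=
  ⟨p.reachable, (dist_le p).trans hp⟩

theorem of_adj (h : G.Adj x y) (hk : 1 ≤ k) : WithinDist G k x y :=
  of_walk (.cons h .nil) (by simpa using hk)

theorem refl (G : SimpleGraph α) (k : ℕ) (x : α) : WithinDist G k x x :=
  of_walk .nil (Nat.zero_le k)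

theorem symm (h : WithinDist G k x y) : WithinDist G k y x :=
  ⟨h.1.symm, dist_comm (G := G) ▸ h.2⟩

theorem mono (h : WithinDist G j x y) (hjk : j ≤ k) : WithinDist G k x y :=
  ⟨h.1, h.2.trans hjk⟩

theorem trans (h : WithinDist G j x y) (h' : WithinDist G k y z) :
    WithinDist G (j + k) x z := by
  obtain ⟨p, hp⟩ := h.1.exists_walk_length_eq_dist
  obtain ⟨q, hq⟩ := h'.1.exists_walk_length_eq_dist
  exact of_walk (p.append q) (by rw [Walk.length_append]; have := h.2; have := h'.2; omega)

theorem level_le (ψ : α → ℕ) (hψ : ∀ ⦃x y⦄, G.Adj x y → ψ y ≤ ψ x + 1)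
    (h : WithinDist G k x y) : ψ y ≤ ψ x + k := by
  obtain ⟨p, hp⟩ := h.1.exists_walk_length_eq_dist
  have key : ∀ {a b : α} (p : G.Walk a b), ψ b ≤ ψ a + p.length := by
    intro a b p
    induction p with
    | nil => simp
    | cons hadj _ ih => have := hψ hadj; rw [Walk.length_cons]; omega
  have := key p
  have := h.2
  omega

end WithinDist

theorem withinDist_two_of_neighborSet_subsingleton {c y y' : α}
    (hc : (G.neighborSet c).Subsingleton) (hy : WithinDist G 2 y c) (hy' : WithinDist G 2 c y') :
    WithinDist G 2 y y' := by
  have near : ∀ {y}, WithinDist G 2 c y →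
      y = c ∨ ∃ z ∈ G.neighborSet c, WithinDist G 1 z y := by
    intro y h
    obtain ⟨p, hp⟩ := h.1.exists_walk_length_eq_dist
    cases p with
    | nil => exact .inl rfl
    | cons hz q =>
      have := h.2
      rw [Walk.length_cons] at hp
      exact .inr ⟨_, hz, .of_walk q (by omega)⟩
  rcases near hy.symm with rfl | ⟨z, hz, hzy⟩
  · exact hy'
  rcases near hy' with rfl | ⟨z', hz', hz'y'⟩
  · exact hy
  exact hzy.symm.trans (hc hz hz' ▸ hz'y')

def IsWeakHom (G : SimpleGraph α) (H : SimpleGraph β) (f : α → β) : Prop :=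
  ∀ ⦃x y⦄, G.Adj x y → f x = f y ∨ H.Adj (f x) (f y)

namespace IsWeakHom

variable {H : SimpleGraph β} {f : α → β}

theorem exists_walk (hf : IsWeakHom G H f) (p : G.Walk x y) :
    ∃ q : H.Walk (f x) (f y), q.length ≤ p.length := by
  induction p with
  | nil => exact ⟨.nil, le_rfl⟩
  | cons h _ ih =>
    obtain ⟨q, hq⟩ := ih
    rcases hf h with he | ha
    · exact ⟨q.copy he.symm rfl, by simp; omega⟩
    · exact ⟨.cons ha q, by simpa using hq⟩

theorem reachable (hf : IsWeakHom G H f) (h : G.Reachable x y) : H.Reachable (f x) (f y) :=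
  let ⟨p⟩ := h
  (hf.exists_walk p).elim fun q _ => q.reachable

theorem withinDist (hf : IsWeakHom G H f) (h : WithinDist G k x y) :
    WithinDist H k (f x) (f y) := by
  obtain ⟨p, hp⟩ := h.1.exists_walk_length_eq_dist
  obtain ⟨q, hq⟩ := hf.exists_walk p
  exact .of_walk q (by have := h.2; omega)

theorem rel_map (hf : IsWeakHom G H f) {D D' : Multiset α}
    (h : Multiset.Rel (WithinDist G k) D D') :
    Multiset.Rel (WithinDist H k) (D.map f) (D'.map f) :=
  Multiset.rel_map.2 (h.mono fun _ _ _ _ => hf.withinDist)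

end IsWeakHom

theorem isWeakHom_of_iso {H : SimpleGraph β} (e : G ≃g H) : IsWeakHom G H e :=
  fun _ _ h => .inr (e.map_adj_iff.2 h)

theorem rel_withinDist_refl (D : Multiset α) : Multiset.Rel (WithinDist G k) D D :=
  Multiset.rel_refl_of_refl_on fun x _ => .refl G k x

end

/-- Removing `x` from `D` and `x₁` from `D₁` in a matching: the guard that was sent to `x₁` is
sent where `x` went instead. -/
theorem rel_map_erase {α β : Type*} [DecidableEq α] {r : α → α → Prop}
    {s : β → β → Prop} {f : α → β} (hf : ∀ ⦃u w⦄, r u w → s (f u) (f w))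
    {D D₁ : Multiset α} {x x₁ : α} (hx : x ∈ D) (hx₁ : x₁ ∈ D₁)
    (hrel : Multiset.Rel r D D₁)
    (hpatch : ∀ ⦃u w⦄, r u x₁ → r x w → s (f u) (f w)) :
    Multiset.Rel s ((D.erase x).map f) ((D₁.erase x₁).map f) := by
  rw [← Multiset.cons_erase hx, Multiset.rel_cons_left] at hrel
  obtain ⟨b, bs, hxb, hrest, heq⟩ := hrel
  have hD₁ : x₁ ::ₘ D₁.erase x₁ = b ::ₘ bs := by rw [Multiset.cons_erase hx₁, heq]
  rcases Multiset.cons_eq_cons.mp hD₁ with ⟨-, hbs⟩ | ⟨-, cs, h1, h2⟩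
  · exact hbs ▸ Multiset.rel_map.2 (hrest.mono fun _ _ _ _ h => hf h)
  · rw [h2, Multiset.rel_cons_right] at hrest
    obtain ⟨u, us, hux₁, hrel', hus⟩ := hrest
    rw [hus, h1, Multiset.map_cons, Multiset.map_cons]
    exact .cons (hpatch hux₁ hxb) (Multiset.rel_map.2 (hrel'.mono fun _ _ _ _ h => hf h))

section EternalNum

variable {α β : Type*} {G : SimpleGraph α} {H : SimpleGraph β} {k m : ℕ}

theorem eternalNum_le {F : Set (Multiset α)} (h : IsEternalFamily G k m F) :
    eternalNum G k ≤ m :=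
  Nat.sInf_le ⟨F, h⟩

theorem exists_isEternalFamily_eternalNum [Fintype α] (G : SimpleGraph α) (k : ℕ) :
    ∃ F, IsEternalFamily G k (eternalNum G k) F := by
  have hall : IsEternalFamily G k (Fintype.card α) {Finset.univ.val} := by
    refine ⟨⟨_, rfl⟩, ?_, ?_⟩
    · rintro D rfl
      exact ⟨by simp, fun w => ⟨w, by simp, .refl G k w⟩⟩
    · rintro D rfl w
      exact ⟨_, rfl, by simp, rel_withinDist_refl _⟩
  exact Nat.sInf_mem (s := {m | ∃ F, IsEternalFamily G k m F}) ⟨_, _, hall⟩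

theorem eternalNum_pos [Fintype α] [Nonempty α] (G : SimpleGraph α) (k : ℕ) :
    0 < eternalNum G k := by
  obtain ⟨F, ⟨D, hD⟩, hF, -⟩ := exists_isEternalFamily_eternalNum G k
  obtain ⟨x, hx, -⟩ := (hF D hD).2 (Classical.arbitrary α)
  exact (hF D hD).1 ▸ Multiset.card_pos_iff_exists_mem.2 ⟨x, hx⟩

theorem IsEternalFamily.map_iso (e : G ≃g H) {F : Set (Multiset α)}
    (h : IsEternalFamily G k m F) : IsEternalFamily H k m ((Multiset.map e) '' F) := by
  obtain ⟨hne, hdom, hdef⟩ := h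
  refine ⟨hne.image _, ?_, ?_⟩
  · rintro _ ⟨D, hD, rfl⟩
    refine ⟨by simp [(hdom D hD).1], fun w => ?_⟩
    obtain ⟨x, hx, hxw⟩ := (hdom D hD).2 (e.symm w)
    exact ⟨e x, Multiset.mem_map_of_mem _ hx,
      by simpa using (isWeakHom_of_iso e).withinDist hxw⟩
  · rintro _ ⟨D, hD, rfl⟩ w
    obtain ⟨D', hD', hw, hrel⟩ := hdef D hD (e.symm w)
    exact ⟨D'.map e, ⟨D', hD', rfl⟩, by simpa using Multiset.mem_map_of_mem e hw,
      (isWeakHom_of_iso e).rel_map hrel⟩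

theorem eternalNum_eq_of_iso [Fintype α] [Fintype β] (e : G ≃g H) (k : ℕ) :
    eternalNum G k = eternalNum H k := by
  obtain ⟨F, hF⟩ := exists_isEternalFamily_eternalNum G k
  obtain ⟨F', hF'⟩ := exists_isEternalFamily_eternalNum H k
  exact (eternalNum_le (hF'.map_iso e.symm)).antisymm (eternalNum_le (hF.map_iso e))

def induceNeIso (e : G ≃g H) (x : α) :
    G.induce {y | y ≠ x} ≃g H.induce {y | y ≠ e x} where
  toEquiv := e.toEquiv.subtypeEquiv fun _ => e.toEquiv.apply_eq_iff_eq.not.symm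
  map_rel_iff' := e.map_adj_iff

theorem eternalCritical_iff_of_iso [Fintype α] [Fintype β] (e : G ≃g H) :
    EternalCritical G ↔ EternalCritical H := by
  classical
  have hdel : ∀ x,
      ((G.induce {y | y ≠ x}).Connected ↔ (H.induce {y | y ≠ e x}).Connected) ∧
      eternalNum (G.induce {y | y ≠ x}) 2 = eternalNum (H.induce {y | y ≠ e x}) 2 :=
    fun x => ⟨(induceNeIso e x).connected_iff, eternalNum_eq_of_iso (induceNeIso e x) 2⟩
  rw [EternalCritical, EternalCritical, eternalNum_eq_of_iso e]
  refine e.toEquiv.forall_congr fun x => ?_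
  rw [(hdel x).1, (hdel x).2]
  rfl

end EternalNum

section Retraction

variable {α β : Type*} {K : SimpleGraph α} {H : SimpleGraph β} {k m : ℕ}
  {F : Set (Multiset β)} {π : β → α} {b : β}

/- In this section every vertex of `K` is the image of a vertex out of reach of `b`, and whenever
`u` reaches a guard position `x'` near `b` while `x` near `b` reaches `w`, `π u` reaches `π w`.
Then one guard near `b` is superfluous: drop it and project the others by `π`. -/

theorem IsEternalFamily.isDistKDomMultiset_map_erase [DecidableEq β]
    (hF : IsEternalFamily H k m F) (hπ : IsWeakHom H K π)
    (hpatch : ∀ ⦃x x' u w⦄, WithinDist H k x b → WithinDist H k x' b →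
      WithinDist H k u x' → WithinDist H k x w → WithinDist K k (π u) (π w))
    (hlift : ∀ t, ∃ z, π z = t ∧ ¬ WithinDist H k z b)
    {D : Multiset β} (hD : D ∈ F) {g : β} (hgb : WithinDist H k g b) :
    IsDistKDomMultiset K k ((D.erase g).map π) := by
  intro t
  obtain ⟨z, rfl, hzb⟩ := hlift t
  -- attack `z` and follow the guard `o` that answers it
  obtain ⟨D₁, hD₁, hzD₁, hrel⟩ := hF.2.2 D hD z
  rw [← Multiset.cons_erase hzD₁, Multiset.rel_cons_right] at hrel
  obtain ⟨o, D', hoz, hrel', rfl⟩ := hrel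
  by_cases hog : o = g
  · subst hog
    obtain ⟨z', hz'D₁, hz'b⟩ := (hF.2.1 D₁ hD₁).2 b
    have hz' : z' ∈ D₁.erase z :=
      (Multiset.mem_erase_of_ne (by rintro rfl; exact hzb hz'b)).2 hz'D₁
    obtain ⟨o', ho'D', ho'z'⟩ :=
      Multiset.exists_mem_of_rel_of_mem (Multiset.rel_flip.2 hrel') hz'
    exact ⟨π o', Multiset.mem_map_of_mem _ (by simpa using ho'D'), hpatch hgb hz'b ho'z' hoz⟩
  · exact ⟨π o, Multiset.mem_map_of_mem _ ((Multiset.mem_erase_of_ne hog).2 (by simp)),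
      hπ.withinDist hoz⟩

theorem IsEternalFamily.retract [DecidableEq β]
    (hF : IsEternalFamily H k m F) (hπ : IsWeakHom H K π)
    (hpatch : ∀ ⦃x x' u w⦄, WithinDist H k x b → WithinDist H k x' b →
      WithinDist H k u x' → WithinDist H k x w → WithinDist K k (π u) (π w))
    (hlift : ∀ t, ∃ z, π z = t ∧ ¬ WithinDist H k z b) :
    IsEternalFamily K k (m - 1)
      {E | ∃ D ∈ F, ∃ g ∈ D, WithinDist H k g b ∧ E = (D.erase g).map π} := by
  refine ⟨?_, ?_, ?_⟩
  · obtain ⟨D, hD⟩ := hF.1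
    obtain ⟨g, hg, hgb⟩ := (hF.2.1 D hD).2 b
    exact ⟨_, D, hD, g, hg, hgb, rfl⟩
  · rintro _ ⟨D, hD, g, hg, hgb, rfl⟩
    refine ⟨?_, hF.isDistKDomMultiset_map_erase hπ hpatch hlift hD hgb⟩
    rw [Multiset.card_map, Multiset.card_erase_of_mem hg, (hF.2.1 D hD).1, Nat.pred_eq_sub_one]
  · rintro _ ⟨D, hD, g, hg, hgb, rfl⟩ t
    obtain ⟨z, rfl, hzb⟩ := hlift t
    obtain ⟨D₁, hD₁, hzD₁, hrel⟩ := hF.2.2 D hD z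
    obtain ⟨g₁, hg₁, hg₁b⟩ := (hF.2.1 D₁ hD₁).2 b
    refine ⟨_, ⟨D₁, hD₁, g₁, hg₁, hg₁b, rfl⟩, Multiset.mem_map_of_mem _
      ((Multiset.mem_erase_of_ne (by rintro rfl; exact hzb hg₁b)).2 hzD₁), ?_⟩
    exact rel_map_erase (r := WithinDist H k) (fun _ _ => hπ.withinDist) hg hg₁ hrel
      fun _ _ hu hw => hpatch hgb hg₁b hu hw

theorem eternalNum_add_one_le_of_retract [Fintype β] (hπ : IsWeakHom H K π)
    (hpatch : ∀ ⦃x x' u w⦄, WithinDist H k x b → WithinDist H k x' b →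
      WithinDist H k u x' → WithinDist H k x w → WithinDist K k (π u) (π w))
    (hlift : ∀ t, ∃ z, π z = t ∧ ¬ WithinDist H k z b) :
    eternalNum K k + 1 ≤ eternalNum H k := by
  classical
  obtain ⟨F, hF⟩ := exists_isEternalFamily_eternalNum H k
  have := eternalNum_le (hF.retract hπ hpatch hlift)
  have : Nonempty β := ⟨b⟩
  have := eternalNum_pos H k
  omega

end Retraction

section ExtraGuard

variable {α β : Type*} {K : SimpleGraph α} {H : SimpleGraph (α ⊕ β)} {k m : ℕ}
  {F : Set (Multiset α)}

theorem IsEternalFamily.cons_inr (hF : IsEternalFamily K k m F) (hι : IsWeakHom K H Sum.inl)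
    (Q : Multiset α → β → Prop) {h : β} (hQ : ∀ D, Q D h)
    (hhome : ∀ q, WithinDist H k (.inr q) (.inr h))
    (hdom : ∀ D ∈ F, ∀ q, Q D q → ∀ j,
      ∃ x ∈ .inr q ::ₘ D.map .inl, WithinDist H k x (.inr j))
    (hdef : ∀ D ∈ F, ∀ q, Q D q → ∀ j, ∃ D' ∈ F, Q D' j ∧
      Multiset.Rel (WithinDist H k) (.inr q ::ₘ D.map .inl) (.inr j ::ₘ D'.map .inl)) :
    IsEternalFamily H k (m + 1)
      {E | ∃ D ∈ F, ∃ q, Q D q ∧ E = .inr q ::ₘ D.map .inl} := by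
  obtain ⟨⟨D, hD⟩, hmem, hbase⟩ := hF
  refine ⟨⟨_, D, hD, h, hQ D, rfl⟩, ?_, ?_⟩
  · rintro _ ⟨D, hD, q, hq, rfl⟩
    refine ⟨by simp [(hmem D hD).1], ?_⟩
    rintro (y | j)
    · obtain ⟨x, hx, hxy⟩ := (hmem D hD).2 y
      exact ⟨.inl x, Multiset.mem_cons_of_mem (Multiset.mem_map_of_mem _ hx),
        hι.withinDist hxy⟩
    · exact hdom D hD q hq j
  · rintro _ ⟨D, hD, q, hq, rfl⟩ (y | j)
    · obtain ⟨D', hD', hy, hrel⟩ := hbase D hD y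
      exact ⟨_, ⟨D', hD', h, hQ D', rfl⟩,
        Multiset.mem_cons_of_mem (Multiset.mem_map_of_mem _ hy),
        .cons (hhome q) (hι.rel_map hrel)⟩
    · obtain ⟨D', hD', hQ', hrel⟩ := hdef D hD q hq j
      exact ⟨_, ⟨D', hD', j, hQ', rfl⟩, Multiset.mem_cons_self _ _, hrel⟩

theorem eternalNum_le_add_one_of_pairwise [Fintype α] [Nonempty β]
    (hι : IsWeakHom K H Sum.inl) (hP : ∀ i j, WithinDist H k (.inr i) (.inr j)) :
    eternalNum H k ≤ eternalNum K k + 1 := by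
  obtain ⟨F, hF⟩ := exists_isEternalFamily_eternalNum K k
  exact eternalNum_le (hF.cons_inr hι (fun _ _ => True) (h := Classical.arbitrary β)
    (fun _ => trivial) (fun q => hP q _)
    (fun _ _ q _ j => ⟨.inr q, Multiset.mem_cons_self _ _, hP q j⟩)
    (fun D hD q _ j => ⟨D, hD, trivial, .cons (hP q j) (rel_withinDist_refl _)⟩))

/-- The extra guard rests at `h`, and may leave it only while a guard of `K` sits at `c`;
the two can always swap through `c`. -/
theorem eternalNum_le_add_one_of_hub [Fintype α] (hι : IsWeakHom K H Sum.inl) (c : α) (h : β)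
    (hhome : ∀ j, WithinDist H k (.inr j) (.inr h))
    (hc : ∀ j, WithinDist H k (.inl c) (.inr j)) :
    eternalNum H k ≤ eternalNum K k + 1 := by
  classical
  obtain ⟨F, hF⟩ := exists_isEternalFamily_eternalNum K k
  refine eternalNum_le (hF.cons_inr hι (fun D q => q = h ∨ c ∈ D) (fun _ => .inl rfl) hhome
    ?_ ?_)
  · rintro D - q (rfl | hcD) j
    · exact ⟨.inr q, Multiset.mem_cons_self _ _, (hhome j).symm⟩
    · exact ⟨.inl c, Multiset.mem_cons_of_mem (Multiset.mem_map_of_mem _ hcD), hc j⟩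
  · rintro D hD q (rfl | hcD) j
    · obtain ⟨D', hD', hcD', hrel⟩ := hF.2.2 D hD c
      exact ⟨D', hD', .inr hcD', .cons (hhome j).symm (hι.rel_map hrel)⟩
    · refine ⟨D, hD, .inr hcD, ?_⟩
      rw [← Multiset.cons_erase hcD, Multiset.map_cons, Multiset.cons_swap (Sum.inr j)]
      exact .cons (hc q).symm (.cons (hc j) (rel_withinDist_refl _))

end ExtraGuard

section Attach

variable {α β : Type*}

def attachAt (K : SimpleGraph α) (c : α) (P : SimpleGraph β) (att : Set β) :
    SimpleGraph (α ⊕ β) where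
  Adj
    | .inl a, .inl b => K.Adj a b
    | .inl a, .inr i => a = c ∧ i ∈ att
    | .inr i, .inl a => a = c ∧ i ∈ att
    | .inr i, .inr j => P.Adj i j
  symm := ⟨by rintro (a | i) (b | j) h <;> first | exact h.symm | exact h⟩
  loopless := ⟨by rintro (a | i) h; exacts [K.loopless.irrefl a h, P.loopless.irrefl i h]⟩

variable {K : SimpleGraph α} {c : α} {P : SimpleGraph β} {att : Set β}

@[simp] theorem attachAt_adj_inl_inl {a b : α} :
    (attachAt K c P att).Adj (.inl a) (.inl b) ↔ K.Adj a b := .rfl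

@[simp] theorem attachAt_adj_inl_inr {a : α} {i : β} :
    (attachAt K c P att).Adj (.inl a) (.inr i) ↔ a = c ∧ i ∈ att := .rfl

@[simp] theorem attachAt_adj_inr_inl {a : α} {i : β} :
    (attachAt K c P att).Adj (.inr i) (.inl a) ↔ a = c ∧ i ∈ att := .rfl

@[simp] theorem attachAt_adj_inr_inr {i j : β} :
    (attachAt K c P att).Adj (.inr i) (.inr j) ↔ P.Adj i j := .rfl

theorem isWeakHom_inl_attachAt : IsWeakHom K (attachAt K c P att) Sum.inl :=
  fun _ _ h => .inr h

theorem isWeakHom_elim_attachAt :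
    IsWeakHom (attachAt K c P att) K (Sum.elim id fun _ => c) := by
  rintro (a | i) (b | j) h
  · exact .inr h
  · exact .inl h.1
  · exact .inl h.1.symm
  · exact .inl rfl

theorem connected_attachAt_iff (hP : ∀ i, (attachAt K c P att).Reachable (.inl c) (.inr i)) :
    (attachAt K c P att).Connected ↔ K.Connected := by
  rw [connected_iff_exists_forall_reachable, connected_iff_exists_forall_reachable]
  refine ⟨fun ⟨x, hx⟩ => ⟨c, fun y => ?_⟩, fun ⟨x, hx⟩ => ⟨.inl c, ?_⟩⟩
  · exact isWeakHom_elim_attachAt.reachable ((hx (.inl c)).symm.trans (hx (.inl y)))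
  · rintro (y | i)
    · exact isWeakHom_inl_attachAt.reachable ((hx c).symm.trans (hx y))
    · exact hP i

theorem withinDist_elim_of_withinDist_inr {k : ℕ} {x : α ⊕ β} {j : β}
    (h : WithinDist (attachAt K c P att) (k + 1) x (.inr j)) :
    WithinDist K k (Sum.elim id (fun _ => c) x) c := by
  rcases x with y | i
  · have hdist := h.symm.level_le (Sum.elim (fun y => K.dist c y + 1) fun _ => 0) <| by
      rintro (a | i) (b | j) hab
      · rcases hab.diff_dist_adj (u := c) with h | h | h <;> simp only [Sum.elim_inl] <;> omega
      · simp
      · obtain ⟨rfl, -⟩ := hab; simp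
      · simp
    refine ⟨(isWeakHom_elim_attachAt.withinDist h).1, ?_⟩
    simp only [Sum.elim_inl, Sum.elim_inr, id] at hdist ⊢
    rw [dist_comm]
    omega
  · exact .refl K k c

def attachAtInduceNeIso {t : α} (hct : c ≠ t) :
    (attachAt K c P att).induce {z | z ≠ .inl t} ≃g
      attachAt (K.induce {y | y ≠ t}) ⟨c, hct⟩ P att where
  toFun
    | ⟨.inl y, h⟩ => .inl ⟨y, fun hy => h (congrArg Sum.inl hy)⟩
    | ⟨.inr j, _⟩ => .inr j
  invFun
    | .inl y => ⟨.inl y, fun hy => y.2 (Sum.inl_injective hy)⟩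
    | .inr j => ⟨.inr j, Sum.inr_ne_inl⟩
  left_inv := by rintro ⟨y | j, h⟩ <;> rfl
  right_inv := by rintro (y | j) <;> rfl
  map_rel_iff' := by
    rintro ⟨y | j, h⟩ ⟨y' | j', h'⟩ <;> simp [Subtype.ext_iff]

end Attach

section Shapes

variable {α : Type*} {K : SimpleGraph α} {c : α}

/-- With `K = T` and `c = v`, the vertices `0`, `1`, `2` are `w`, `a`, `b` of the theorem. -/
abbrev attachLeafP2 (K : SimpleGraph α) (c : α) : SimpleGraph (α ⊕ Fin 3) :=
  attachAt K c (edge 1 2) {0, 1}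

abbrev attachP3 (K : SimpleGraph α) (c : α) : SimpleGraph (α ⊕ Fin 3) :=
  attachAt K c (pathGraph 3) {0}

abbrev attachCherry (K : SimpleGraph α) (c : α) : SimpleGraph (α ⊕ Fin 3) :=
  attachAt K c (starGraph 2) {0}

theorem attachLeafP2_withinDist_inl_inr (j : Fin 3) :
    WithinDist (attachLeafP2 K c) 2 (.inl c) (.inr j) := by
  have h1 : (attachLeafP2 K c).Adj (.inl c) (.inr 1) := by simp
  fin_cases j
  · exact .of_adj (by simp) (by norm_num)
  · exact .of_adj h1 (by norm_num)
  · exact (WithinDist.of_adj h1 le_rfl).trans (.of_adj (by simp [edge_adj]) le_rfl)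

theorem attachLeafP2_withinDist_inr_one (j : Fin 3) :
    WithinDist (attachLeafP2 K c) 2 (.inr j) (.inr 1) := by
  fin_cases j
  · exact (WithinDist.of_adj (y := .inl c) (by simp) le_rfl).trans (.of_adj (by simp) le_rfl)
  · exact .refl _ _ _
  · exact .of_adj (by simp [edge_adj]) (by norm_num)

theorem attachLeafP2_eq_of_withinDist {x : α ⊕ Fin 3}
    (h : WithinDist (attachLeafP2 K c) 2 x (.inr 2)) :
    x = .inl c ∨ x = .inr 1 ∨ x = .inr 2 := by
  classical
  -- the distance to `inr 2`, capped at `3`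
  have := h.symm.level_le (Sum.elim (fun y => if y = c then 2 else 3) ![3, 1, 0]) <| by
    rintro (a | i) (b | j) hab
    · simp only [Sum.elim_inl]; split_ifs <;> omega
    · obtain ⟨rfl, hj⟩ := hab; fin_cases j <;> simp
    · obtain ⟨rfl, hi⟩ := hab; fin_cases i <;> simp_all
    · fin_cases i <;> fin_cases j <;> simp_all [edge_adj]
  rcases x with y | i
  · by_cases hy : y = c
    · exact .inl (hy ▸ rfl)
    · simp [hy] at this
  · fin_cases i <;> simp_all

theorem eternalNum_attachLeafP2 [Fintype α] (hc : (K.neighborSet c).Subsingleton) :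
    eternalNum (attachLeafP2 K c) 2 = eternalNum K 2 + 1 := by
  refine (eternalNum_le_add_one_of_hub isWeakHom_inl_attachAt c 1
    attachLeafP2_withinDist_inr_one attachLeafP2_withinDist_inl_inr).antisymm
    (eternalNum_add_one_le_of_retract (b := .inr 2) isWeakHom_elim_attachAt ?_ ?_)
  · have hπ : ∀ {x}, WithinDist (attachLeafP2 K c) 2 x (.inr 2) →
        Sum.elim id (fun _ => c) x = c := fun h => by
      rcases attachLeafP2_eq_of_withinDist h with rfl | rfl | rfl <;> rfl
    intro x x' u w hx hx' hu hw
    have hu' := isWeakHom_elim_attachAt.withinDist hu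
    have hw' := isWeakHom_elim_attachAt.withinDist hw
    rw [hπ hx'] at hu'
    rw [hπ hx] at hw'
    exact withinDist_two_of_neighborSet_subsingleton hc hu' hw'
  · intro t
    by_cases htc : t = c
    · refine ⟨.inr 0, htc.symm, fun h => ?_⟩
      simpa using attachLeafP2_eq_of_withinDist h
    · exact ⟨.inl t, rfl, fun h => by simpa [htc] using attachLeafP2_eq_of_withinDist h⟩

theorem attachP3_withinDist (i j : Fin 3) : WithinDist (attachP3 K c) 2 (.inr i) (.inr j) := by
  have h01 : WithinDist (attachP3 K c) 1 (.inr 0) (.inr 1) :=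
    .of_adj (by simp [pathGraph_adj]) le_rfl
  have h12 : WithinDist (attachP3 K c) 1 (.inr 1) (.inr 2) :=
    .of_adj (by simp [pathGraph_adj]) le_rfl
  fin_cases i <;> fin_cases j
  exacts [.refl _ _ _, h01.mono (by norm_num), h01.trans h12, h01.symm.mono (by norm_num),
    .refl _ _ _, h12.mono (by norm_num), (h01.trans h12).symm, h12.symm.mono (by norm_num),
    .refl _ _ _]

theorem attachP3_isRight_of_withinDist {x : α ⊕ Fin 3}
    (h : WithinDist (attachP3 K c) 2 x (.inr 2)) : x.isRight := by
  -- the distance to `inr 2`, capped at `3`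
  have := h.symm.level_le (Sum.elim (fun _ => 3) fun i : Fin 3 => 2 - (i : ℕ)) <| by
    rintro (a | i) (b | j) hab
    · simp
    · obtain ⟨rfl, rfl⟩ := hab; simp
    · obtain ⟨rfl, rfl⟩ := hab; simp
    · fin_cases i <;> fin_cases j <;> simp_all [pathGraph_adj]
  rcases x with y | i
  · simp at this
  · rfl

theorem eternalNum_attachP3 [Fintype α] : eternalNum (attachP3 K c) 2 = eternalNum K 2 + 1 := by
  refine (eternalNum_le_add_one_of_pairwise isWeakHom_inl_attachAt attachP3_withinDist).antisymm
    (eternalNum_add_one_le_of_retract (b := .inr 2) isWeakHom_elim_attachAt ?_ ?_)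
  · intro x x' u w hx hx' hu hw
    obtain ⟨j', rfl⟩ := Sum.isRight_iff.1 (attachP3_isRight_of_withinDist hx')
    obtain ⟨j, rfl⟩ := Sum.isRight_iff.1 (attachP3_isRight_of_withinDist hx)
    exact (withinDist_elim_of_withinDist_inr (k := 1) hu).trans
      (withinDist_elim_of_withinDist_inr (k := 1) hw.symm).symm
  · exact fun t => ⟨.inl t, rfl, fun h => by simpa using attachP3_isRight_of_withinDist h⟩

theorem attachCherry_withinDist_inr_zero (j : Fin 3) :
    WithinDist (attachCherry K c) 2 (.inr j) (.inr 0) := by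
  fin_cases j
  · exact .refl _ _ _
  all_goals exact .of_adj (by simp [starGraph]) (by norm_num)

theorem attachCherry_withinDist_inl_inr (j : Fin 3) :
    WithinDist (attachCherry K c) 2 (.inl c) (.inr j) := by
  have h0 : WithinDist (attachCherry K c) 1 (.inl c) (.inr 0) := .of_adj (by simp) le_rfl
  fin_cases j
  · exact h0.mono (by norm_num)
  all_goals exact h0.trans (.of_adj (by simp [starGraph]) le_rfl)

theorem eternalNum_attachCherry_le [Fintype α] :
    eternalNum (attachCherry K c) 2 ≤ eternalNum K 2 + 1 :=
  eternalNum_le_add_one_of_hub isWeakHom_inl_attachAt c 0 attachCherry_withinDist_inr_zero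
    attachCherry_withinDist_inl_inr

end Shapes

section LeafDeletion

variable {α : Type*} [DecidableEq α] {K : SimpleGraph α} {c u : α}

def attachLeafP2InduceNeLeafIso (hcu : K.Adj c u) (hu : ∀ z, K.Adj c z → z = u) :
    (attachLeafP2 K c).induce {z | z ≠ .inr 0} ≃g
      attachP3 (K.induce {y | y ≠ c}) ⟨u, hcu.ne'⟩ where
  toFun
    | ⟨.inl y, _⟩ => if h : y = c then .inr 0 else .inl ⟨y, h⟩
    | ⟨.inr j, _⟩ => .inr j
  invFun
    | .inl y => ⟨.inl y, Sum.inl_ne_inr⟩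
    | .inr j => if h : j = 0 then ⟨.inl c, Sum.inl_ne_inr⟩ else ⟨.inr j, by simpa using h⟩
  left_inv := by
    rintro ⟨y | j, h⟩
    · by_cases hy : y = c <;> simp [hy]
    · have : j ≠ 0 := fun hj => h (hj ▸ rfl)
      simp [this]
  right_inv := by
    rintro (y | j)
    · simp [show (y : α) ≠ c from y.2]
    · by_cases hj : j = 0 <;> simp [hj]
  map_rel_iff' := by
    have hleaf : ∀ z, K.Adj c z ↔ z = u := fun z => ⟨hu z, fun h => h ▸ hcu⟩
    rintro ⟨y | j, h⟩ ⟨y' | j', h'⟩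
    · by_cases hy : y = c <;> by_cases hy' : y' = c <;>
        simp [hy, hy', hleaf, K.adj_comm _ c]
    · simp only [Set.mem_ofPred_eq, ne_eq, Sum.inr.injEq] at h'
      by_cases hy : y = c <;> fin_cases j' <;> simp_all [pathGraph_adj]
    · simp only [Set.mem_ofPred_eq, ne_eq, Sum.inr.injEq] at h
      by_cases hy' : y' = c <;> fin_cases j <;> simp_all [pathGraph_adj]
    · simp only [Set.mem_ofPred_eq, ne_eq, Sum.inr.injEq] at h h'
      fin_cases j <;> fin_cases j' <;> simp_all [pathGraph_adj, edge_adj]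

def attachLeafP2InduceNeFarIso (hcu : K.Adj c u) (hu : ∀ z, K.Adj c z → z = u) :
    (attachLeafP2 K c).induce {z | z ≠ .inr 2} ≃g
      attachCherry (K.induce {y | y ≠ c}) ⟨u, hcu.ne'⟩ where
  toFun
    | ⟨.inl y, _⟩ => if h : y = c then .inr 0 else .inl ⟨y, h⟩
    | ⟨.inr j, _⟩ => .inr (j + 1)
  invFun
    | .inl y => ⟨.inl y, Sum.inl_ne_inr⟩
    | .inr j => if h : j = 0 then ⟨.inl c, Sum.inl_ne_inr⟩ else ⟨.inr (j - 1), by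
        simpa [sub_eq_iff_eq_add] using h⟩
  left_inv := by
    rintro ⟨y | j, h⟩
    · by_cases hy : y = c <;> simp [hy]
    · simp only [Set.mem_ofPred_eq, ne_eq, Sum.inr.injEq] at h
      fin_cases j <;> simp_all
  right_inv := by
    rintro (y | j)
    · simp [show (y : α) ≠ c from y.2]
    · fin_cases j <;> simp
  map_rel_iff' := by
    have hleaf : ∀ z, K.Adj c z ↔ z = u := fun z => ⟨hu z, fun h => h ▸ hcu⟩
    rintro ⟨y | j, h⟩ ⟨y' | j', h'⟩
    · by_cases hy : y = c <;> by_cases hy' : y' = c <;>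
        simp [hy, hy', hleaf, K.adj_comm _ c]
    · simp only [Set.mem_ofPred_eq, ne_eq, Sum.inr.injEq] at h'
      by_cases hy : y = c <;> fin_cases j' <;> simp_all [starGraph]
    · simp only [Set.mem_ofPred_eq, ne_eq, Sum.inr.injEq] at h
      by_cases hy' : y' = c <;> fin_cases j <;> simp_all [starGraph]
    · simp only [Set.mem_ofPred_eq, ne_eq, Sum.inr.injEq] at h h'
      fin_cases j <;> fin_cases j' <;> simp_all [starGraph, edge_adj]

end LeafDeletion

section AttachPath

variable {α : Type*}

theorem attachPath_eq_attachAt (G : SimpleGraph α) (y : α) (n : ℕ) :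
    attachPath G y n = attachAt G y (pathGraph n) {i | (i : ℕ) = 0} := by
  ext (a | i) (b | j)
  · simpa [attachPath, map_adj'] using G.ne_of_adj
  · simpa [attachPath, map_adj', Fin.ext_iff, and_comm] using fun _ _ => j.pos
  · simpa [attachPath, map_adj', Fin.ext_iff, and_comm] using fun _ _ => i.pos
  · simpa [attachPath, map_adj'] using (pathGraph n).ne_of_adj



def attachPathAttachPathIso (G : SimpleGraph α) (v : α) :
    attachPath (attachPath G v 2) (.inl v) 1 ≃g attachLeafP2 G v where
  toFun
    | .inl (.inl t) => .inl t
    | .inl (.inr i) => .inr i.succ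
    | .inr _ => .inr 0
  invFun
    | .inl t => .inl (.inl t)
    | .inr j => Fin.cases (.inr 0) (fun i => .inl (.inr i)) j
  left_inv := by
    rintro ((t | i) | i)
    · rfl
    · rfl
    · rw [Subsingleton.elim i 0]; rfl
  right_inv := by
    rintro (t | j)
    · rfl
    · fin_cases j <;> rfl
  map_rel_iff' := by
    rw [attachPath_eq_attachAt, attachPath_eq_attachAt]
    rintro ((t | i) | i) ((t' | i') | i') <;> (try fin_cases i) <;> (try fin_cases i') <;>
      simp [edge_adj, pathGraph_adj]

end AttachPath

section Criticality

variable {α : Type*} {K : SimpleGraph α} {c u t : α}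

theorem not_connected_induce_ne {G : SimpleGraph α} {x y z : α} (hy : ∀ w, G.Adj y w → w = x)
    (hyx : y ≠ x) (hzx : z ≠ x) (hzy : z ≠ y) : ¬(G.induce {w | w ≠ x}).Connected := by
  intro h
  obtain ⟨p⟩ := h.preconnected ⟨y, hyx⟩ ⟨z, hzx⟩
  cases p with
  | nil => exact hzy rfl
  | @cons _ w _ hadj _ => exact w.2 (hy _ hadj)

theorem connected_attachLeafP2_induce_ne_inl (hct : c ≠ t) :
    ((attachLeafP2 K c).induce {z | z ≠ .inl t}).Connected ↔
      (K.induce {y | y ≠ t}).Connected :=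
  (attachAtInduceNeIso hct).connected_iff.trans
    (connected_attachAt_iff fun j => (attachLeafP2_withinDist_inl_inr j).1)

theorem eternalNum_attachLeafP2_induce_ne_inl [Fintype α] [DecidableEq α]
    (hu : ∀ z, K.Adj c z → z = u) (hct : c ≠ t) :
    eternalNum ((attachLeafP2 K c).induce {z | z ≠ .inl t}) 2 =
      eternalNum (K.induce {y | y ≠ t}) 2 + 1 :=
  (eternalNum_eq_of_iso (attachAtInduceNeIso hct) 2).trans <| eternalNum_attachLeafP2
    fun _ hz _ hz' => Subtype.ext ((hu _ hz).trans (hu _ hz').symm)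

theorem connected_attachLeafP2_induce_ne_leaf [DecidableEq α] (hcu : K.Adj c u)
    (hu : ∀ z, K.Adj c z → z = u) :
    ((attachLeafP2 K c).induce {z | z ≠ .inr 0}).Connected ↔
      (K.induce {y | y ≠ c}).Connected :=
  (attachLeafP2InduceNeLeafIso hcu hu).connected_iff.trans <| connected_attachAt_iff fun j =>
    (WithinDist.of_adj (by simp) le_rfl).1.trans (attachP3_withinDist 0 j).1

theorem eternalNum_attachLeafP2_induce_ne_leaf [Fintype α] [DecidableEq α] (hcu : K.Adj c u)
    (hu : ∀ z, K.Adj c z → z = u) :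
    eternalNum ((attachLeafP2 K c).induce {z | z ≠ .inr 0}) 2 =
      eternalNum (K.induce {y | y ≠ c}) 2 + 1 :=
  (eternalNum_eq_of_iso (attachLeafP2InduceNeLeafIso hcu hu) 2).trans eternalNum_attachP3

theorem connected_attachLeafP2_induce_ne_far [DecidableEq α] (hcu : K.Adj c u)
    (hu : ∀ z, K.Adj c z → z = u) :
    ((attachLeafP2 K c).induce {z | z ≠ .inr 2}).Connected ↔
      (K.induce {y | y ≠ c}).Connected :=
  (attachLeafP2InduceNeFarIso hcu hu).connected_iff.trans <| connected_attachAt_iff fun j =>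
    (attachCherry_withinDist_inl_inr j).1

theorem eternalNum_attachLeafP2_induce_ne_far_le [Fintype α] [DecidableEq α] (hcu : K.Adj c u)
    (hu : ∀ z, K.Adj c z → z = u) :
    eternalNum ((attachLeafP2 K c).induce {z | z ≠ .inr 2}) 2 ≤
      eternalNum (K.induce {y | y ≠ c}) 2 + 1 :=
  (eternalNum_eq_of_iso (attachLeafP2InduceNeFarIso hcu hu) 2).trans_le eternalNum_attachCherry_le

theorem not_connected_attachLeafP2_induce_ne_inl :
    ¬((attachLeafP2 K c).induce {z | z ≠ .inl c}).Connected :=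
  not_connected_induce_ne (y := .inr 0) (z := .inr 1)
    (by rintro (a | j) h <;> simp_all [edge_adj]) (by simp) (by simp) (by simp)

theorem not_connected_attachLeafP2_induce_ne_inr_one :
    ¬((attachLeafP2 K c).induce {z | z ≠ .inr 1}).Connected :=
  not_connected_induce_ne (y := .inr 2) (z := .inr 0)
    (by rintro (a | j) h; exacts [absurd h (by simp), by fin_cases j <;> simp_all [edge_adj]])
    (by simp) (by simp) (by simp)

theorem eternalCritical_attachLeafP2_iff [Fintype α] [DecidableEq α] (hcu : K.Adj c u)
    (hu : ∀ z, K.Adj c z → z = u) :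
    EternalCritical (attachLeafP2 K c) ↔ EternalCritical K := by
  have hH := eternalNum_attachLeafP2 (K := K) fun _ hz _ hz' => (hu _ hz).trans (hu _ hz').symm
  refine ⟨fun hcrit x hx => ?_, fun hcrit z hz => ?_⟩
  · rcases eq_or_ne c x with rfl | hcx
    · have := hcrit (.inr 0) ((connected_attachLeafP2_induce_ne_leaf hcu hu).2 hx)
      rw [eternalNum_attachLeafP2_induce_ne_leaf hcu hu, hH] at this
      omega
    · have := hcrit (.inl x) ((connected_attachLeafP2_induce_ne_inl hcx).2 hx)
      rw [eternalNum_attachLeafP2_induce_ne_inl hu hcx, hH] at this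
      omega
  rw [hH]
  rcases z with t | j
  · rcases eq_or_ne c t with rfl | hct
    · exact absurd hz not_connected_attachLeafP2_induce_ne_inl
    · have := hcrit t ((connected_attachLeafP2_induce_ne_inl hct).1 hz)
      rw [eternalNum_attachLeafP2_induce_ne_inl hu hct]
      omega
  match j, hz with
  | 0, hz =>
    have := hcrit c ((connected_attachLeafP2_induce_ne_leaf hcu hu).1 hz)
    rw [eternalNum_attachLeafP2_induce_ne_leaf hcu hu]
    omega
  | 1, hz => exact absurd hz not_connected_attachLeafP2_induce_ne_inr_one
  | 2, hz =>
    have := hcrit c ((connected_attachLeafP2_induce_ne_far hcu hu).1 hz)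
    have := eternalNum_attachLeafP2_induce_ne_far_le hcu hu
    omega

end Criticality

theorem critical_extension_P4_general {V : Type u} [Fintype V] (G : SimpleGraph V)
    (v : V) (hv : IsLeafV G v) :
    EternalCritical (attachPath (attachPath G v 2) (Sum.inl v) 1) ↔ EternalCritical G := by
  classical
  obtain ⟨u, hvu, hu⟩ := hv
  exact (eternalCritical_iff_of_iso (attachPathAttachPathIso G v)).trans
    (eternalCritical_attachLeafP2_iff hvu hu)

/-- appending a path on two vertices and a single extra leaf to a leaf
preserves (in both directions) eternal distance-2 domination criticality. -/
theorem critical_extension_P4 {V : Type u} [Fintype V] (G : SimpleGraph V) (hG : G.IsTree)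
    (v : V) (hv : IsLeafV G v) :
    EternalCritical (attachPath (attachPath G v 2) (Sum.inl v) 1) ↔ EternalCritical G :=
  critical_extension_P4_general G v hv

end EternalDom
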